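/- arXiv:0809.2021 — 5 statements merged into one kernel-verified Lean document; each statement's English description precedes it below -/
import Mathlib

section
/- Let (R, P) be a discrete valuation ring with maximal ideal P and let c be a semiprime operation on R. If there exist integers m < n with c(P^i) constant for m ≤ i ≤ n (equivalently, c(P^m) = c(P^n)), then there exists an integer j ≤ m such that c(P^i) = P^j for all i ≥ j. -/
/-!
Since `c` is extensive, `c (P ^ m)` is a nonzero ideal, hence a power `P ^ j` with `j ≤ m`; as
`P ^ n ≤ P ^ (j + 1) ≤ P ^ j = c (P ^ n)`, also `c (P ^ (j + 1)) = P ^ j`. Semiprimality then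
propagates the value `P ^ j` upwards: `P ^ (j + 1) = c (P ^ i) * P ≤ c (P ^ (i + 1)) ≤ c (P ^ i)`,
and a closed ideal containing `P ^ (j + 1)` contains its closure `P ^ j`.
-/

/-- A closure operation on the set of ideals of a commutative ring. -/
def IsClosureOperation {R : Type*} [CommRing R] (c : Ideal R → Ideal R) : Prop :=
  (∀ I : Ideal R, I ≤ c I) ∧ (∀ I J : Ideal R, I ≤ J → c I ≤ c J) ∧
    (∀ I : Ideal R, c (c I) = c I)

/-- A semiprime operation: a closure operation satisfying `c I * c J ≤ c (I * J)`. -/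
def IsSemiprimeOperation {R : Type*} [CommRing R] (c : Ideal R → Ideal R) : Prop :=
  IsClosureOperation c ∧ ∀ I J : Ideal R, c I * c J ≤ c (I * J)

/-- A prime operation: a semiprime operation satisfying `c (bI) = b • c I` for every
non-zerodivisor `b`. -/
def IsPrimeOperation {R : Type*} [CommRing R] (c : Ideal R → Ideal R) : Prop :=
  IsSemiprimeOperation c ∧
    ∀ b : R, b ∈ nonZeroDivisors R → ∀ I : Ideal R,
      c (Ideal.span {b} * I) = Ideal.span {b} * c I

namespace IsDiscreteValuationRing

variable {R : Type*} [CommRing R] [IsDomain R] [IsDiscreteValuationRing R]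

theorem maximalIdeal_pow_strictAnti : StrictAnti (IsLocalRing.maximalIdeal R ^ ·) :=
  Ideal.pow_right_strictAnti _ (not_a_field R) (IsLocalRing.maximalIdeal.isMaximal R).ne_top

theorem exists_eq_maximalIdeal_pow {I : Ideal R} (hI : I ≠ ⊥) :
    ∃ n : ℕ, I = IsLocalRing.maximalIdeal R ^ n := by
  obtain ⟨ϖ, hϖ⟩ := exists_irreducible R
  obtain ⟨n, hn⟩ := ideal_eq_span_pow_irreducible hI hϖ
  exact ⟨n, by rw [hn, hϖ.maximalIdeal_eq, Ideal.span_singleton_pow]⟩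

theorem maximalIdeal_pow_ne_bot (n : ℕ) : IsLocalRing.maximalIdeal R ^ n ≠ ⊥ :=
  pow_ne_zero n (not_a_field R)

end IsDiscreteValuationRing

namespace IsClosureOperation

variable {R : Type*} [CommRing R] {c : Ideal R → Ideal R}

theorem closure_le_closure_of_le_closure (hc : IsClosureOperation c) {I J : Ideal R}
    (h : I ≤ c J) : c I ≤ c J :=
  (hc.2.1 _ _ h).trans (hc.2.2 J).le

theorem closure_eq_of_le_of_le_closure (hc : IsClosureOperation c) {I J : Ideal R}
    (hIJ : I ≤ J) (hJI : J ≤ c I) : c J = c I :=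
  le_antisymm (hc.closure_le_closure_of_le_closure hJI) (hc.2.1 _ _ hIJ)

end IsClosureOperation

theorem IsSemiprimeOperation.closure_pow_eq_of_closure_pow_succ_eq {R : Type*} [CommRing R]
    {c : Ideal R → Ideal R} (hc : IsSemiprimeOperation c) {P : Ideal R} {j : ℕ}
    (h : c (P ^ (j + 1)) = P ^ j) {i : ℕ} (hi : j ≤ i) : c (P ^ i) = P ^ j := by
  obtain ⟨hcl, hmul⟩ := hc
  have ⟨hext, hmono, hidem⟩ := hcl
  induction i, hi using Nat.le_induction with
  | base => rw [← h, hidem]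
  | succ i _ ih =>
    have hlow : P ^ (j + 1) ≤ c (P ^ (i + 1)) :=
      calc P ^ (j + 1) = c (P ^ i) * P := by rw [ih, pow_succ]
        _ ≤ c (P ^ i) * c P := Ideal.mul_mono_right (hext P)
        _ ≤ c (P ^ (i + 1)) := pow_succ P i ▸ hmul _ _
    refine le_antisymm ?_ ?_
    · exact ih ▸ hmono _ _ (Ideal.pow_le_pow_right i.le_succ)
    · exact h ▸ hcl.closure_le_closure_of_le_closure hlow

theorem dvr_semiprime_constant_interval {R : Type*} [CommRing R] [IsDomain R]
    [IsDiscreteValuationRing R] (P : Ideal R) (hP : P = IsLocalRing.maximalIdeal R)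
    (c : Ideal R → Ideal R) (hc : IsSemiprimeOperation c)
    (m n : ℕ) (hmn : m < n) (h : c (P ^ m) = c (P ^ n)) :
    ∃ j : ℕ, j ≤ m ∧ ∀ i : ℕ, j ≤ i → c (P ^ i) = P ^ j := by
  subst hP
  set P := IsLocalRing.maximalIdeal R
  have hext : P ^ m ≤ c (P ^ m) := hc.1.1 _
  obtain ⟨j, hj⟩ := IsDiscreteValuationRing.exists_eq_maximalIdeal_pow
    (ne_bot_of_le_ne_bot (IsDiscreteValuationRing.maximalIdeal_pow_ne_bot m) hext)
  have hjm : j ≤ m := IsDiscreteValuationRing.maximalIdeal_pow_strictAnti.le_iff_ge.1 (hj ▸ hext)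
  have hsucc : c (P ^ (j + 1)) = P ^ j := by
    have hn : P ^ n ≤ P ^ (j + 1) := Ideal.pow_le_pow_right (by omega)
    have hj1 : P ^ (j + 1) ≤ c (P ^ n) := h ▸ hj ▸ Ideal.pow_le_pow_right j.le_succ
    rw [hc.1.closure_eq_of_le_of_le_closure hn hj1, ← h, hj]
  exact ⟨j, hjm, fun i hi => hc.closure_pow_eq_of_closure_pow_succ_eq hsucc hi⟩
end

section
/- Let (R, P) be a discrete valuation ring with maximal ideal P. A map c from the set of ideals of R to itself is a semiprime operation if and only if either c is the identity map, or there exists an integer m ≥ 0 such that c(P^i) = P^i for 0 ≤ i < m, c(P^i) = P^m for all i ≥ m, and either c(0) = (0) or c(0) = P^m. -/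
/-
In a DVR the ideals are `⊥` and the powers `𝔪 ^ i`, ordered reversely to the exponents, so a
closure operation `c` is described by `c (𝔪 ^ i) = 𝔪 ^ f i` and by `c ⊥`. The closure axioms
make `f : ℕ → ℕ` monotone, idempotent and bounded by the identity, and semiprimality makes it
subadditive; in particular `f (i + 1) ≤ f i + 1`. Since `f 0 = 0`, the image of `f` is then an
initial segment of `ℕ`, on which `f` is the identity by idempotence. Either the image is all of
`ℕ` and `f = id`, or it is `{0, …, m}` and `f i = min i m`. Finally `c ⊥` lies below every
`c (𝔪 ^ i)` and is fixed by `c`, which forces `c ⊥ = ⊥` when `f = id`, and `c ⊥ ∈ {⊥, 𝔪 ^ m}`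
otherwise.
-/

theorem Nat.apply_eq_self_of_le_apply {f : ℕ → ℕ} (hzero : f 0 = 0)
    (hstep : ∀ i, f (i + 1) ≤ f i + 1) (hidem : ∀ i, f (f i) = f i) {i k : ℕ} (hk : k ≤ f i) :
    f k = k := by
  induction i generalizing k with
  | zero =>
    rw [hzero, Nat.le_zero] at hk
    rw [hk, hzero]
  | succ i ih =>
    rcases Nat.le_add_one_iff.mp (hk.trans (hstep i)) with hk' | rfl
    · exact ih hk'
    · rw [← le_antisymm (hstep i) hk, hidem]

theorem Nat.eq_id_or_eq_min_of_subadditive {f : ℕ → ℕ} (hle : ∀ i, f i ≤ i) (hmono : Monotone f)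
    (hidem : ∀ i, f (f i) = f i) (hsub : ∀ i j, f (i + j) ≤ f i + f j) :
    f = id ∨ ∃ m, ∀ i, f i = min i m := by
  have hfix : ∀ {i k}, k ≤ f i → f k = k :=
    Nat.apply_eq_self_of_le_apply (Nat.le_zero.mp (hle 0))
      (fun i => (hsub i 1).trans (Nat.add_le_add_left (hle 1) _)) hidem
  by_cases hbdd : BddAbove (Set.range f)
  · right
    obtain ⟨j, hj⟩ : sSup (Set.range f) ∈ Set.range f := Nat.sSup_mem (Set.range_nonempty f) hbdd
    refine ⟨f j, fun i => ?_⟩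
    rcases le_total i (f j) with h | h
    · rw [min_eq_left h, hfix h]
    · rw [min_eq_right h]
      exact le_antisymm (hj ▸ le_csSup hbdd ⟨i, rfl⟩) (hidem j ▸ hmono h)
  · left
    funext k
    obtain ⟨_, ⟨i, rfl⟩, hi⟩ := not_bddAbove_iff.mp hbdd k
    exact hfix hi.le

theorem forall_apply_eq_min_iff {α : Type*} {g h : ℕ → α} {m : ℕ} :
    (∀ i, g i = h (min i m)) ↔ (∀ i < m, g i = h i) ∧ ∀ i, m ≤ i → g i = h m := by
  refine ⟨fun H => ⟨fun i hi => ?_, fun i hi => ?_⟩, fun ⟨Hlt, Hge⟩ i => ?_⟩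
  · rw [H, min_eq_left hi.le]
  · rw [H, min_eq_right hi]
  · rcases lt_or_ge i m with hi | hi
    · rw [Hlt i hi, min_eq_left hi.le]
    · rw [Hge i hi, min_eq_right hi]

theorem isSemiprimeOperation_id {R : Type*} [CommRing R] :
    IsSemiprimeOperation (id : Ideal R → Ideal R) :=
  ⟨⟨fun _ => le_rfl, fun _ _ h => h, fun _ => rfl⟩, fun _ _ => le_rfl⟩

section DiscreteValuationRing

variable {R : Type*} [CommRing R] [IsDomain R] [IsDiscreteValuationRing R]
  {c : Ideal R → Ideal R}

local notation "𝔪" => IsLocalRing.maximalIdeal R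

theorem IsDiscreteValuationRing.maximalIdeal_pow_le_pow_iff {i j : ℕ} :
    𝔪 ^ i ≤ 𝔪 ^ j ↔ j ≤ i := by
  rw [← idealOrderIsoENat_symm_apply_coe, ← idealOrderIsoENat_symm_apply_coe,
    OrderIso.le_iff_le]
  exact Nat.cast_le (α := ℕ∞)

theorem IsDiscreteValuationRing.maximalIdeal_pow_ne_bot_s2 (n : ℕ) : 𝔪 ^ n ≠ ⊥ :=
  pow_ne_zero n (not_a_field R)

theorem IsDiscreteValuationRing.eq_bot_or_exists_eq_maximalIdeal_pow (I : Ideal R) :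
    I = ⊥ ∨ ∃ n : ℕ, I = 𝔪 ^ n := by
  obtain ⟨x, hx⟩ := OrderDual.toDual.surjective (idealOrderIsoENat R I)
  rw [← (idealOrderIsoENat R).symm_apply_apply I, ← hx]
  induction x with
  | top => exact Or.inl rfl
  | coe n => exact Or.inr ⟨n, rfl⟩

open IsDiscreteValuationRing

theorem IsClosureOperation.exists_map_maximalIdeal_pow_eq (hc : IsClosureOperation c) (i : ℕ) :
    ∃ k, c (𝔪 ^ i) = 𝔪 ^ k :=
  (eq_bot_or_exists_eq_maximalIdeal_pow _).resolve_left fun h =>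
    maximalIdeal_pow_ne_bot_s2 i (eq_bot_iff.mpr (h ▸ hc.1 _))

theorem IsSemiprimeOperation.eq_id_or_eq_min (hc : IsSemiprimeOperation c) {f : ℕ → ℕ}
    (hf : ∀ i, c (𝔪 ^ i) = 𝔪 ^ f i) : f = id ∨ ∃ m, ∀ i, f i = min i m := by
  obtain ⟨⟨hext, hmono, hidem⟩, hmul⟩ := hc
  refine Nat.eq_id_or_eq_min_of_subadditive (fun i => ?_) (fun i j hij => ?_) (fun i => ?_)
    (fun i j => ?_)
  · simpa only [hf, maximalIdeal_pow_le_pow_iff] using hext (𝔪 ^ i)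
  · simpa only [hf, maximalIdeal_pow_le_pow_iff] using
      hmono _ _ (maximalIdeal_pow_le_pow_iff.mpr hij)
  · have h := hidem (𝔪 ^ i)
    rw [hf, hf] at h
    exact le_antisymm (maximalIdeal_pow_le_pow_iff.mp h.ge) (maximalIdeal_pow_le_pow_iff.mp h.le)
  · simpa only [hf, ← pow_add, maximalIdeal_pow_le_pow_iff] using hmul (𝔪 ^ i) (𝔪 ^ j)

theorem IsClosureOperation.map_bot_of_map_maximalIdeal_pow_eq_self (hc : IsClosureOperation c)
    (hf : ∀ i, c (𝔪 ^ i) = 𝔪 ^ i) : c ⊥ = ⊥ := by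
  refine (eq_bot_or_exists_eq_maximalIdeal_pow (c ⊥)).resolve_right fun ⟨k, hk⟩ => ?_
  have h := hc.2.1 ⊥ (𝔪 ^ (k + 1)) bot_le
  rw [hk, hf, maximalIdeal_pow_le_pow_iff] at h
  omega

theorem IsClosureOperation.map_bot_of_map_maximalIdeal_pow_eq_min (hc : IsClosureOperation c)
    {m : ℕ} (hf : ∀ i, c (𝔪 ^ i) = 𝔪 ^ min i m) : c ⊥ = ⊥ ∨ c ⊥ = 𝔪 ^ m := by
  refine (eq_bot_or_exists_eq_maximalIdeal_pow (c ⊥)).imp_right fun ⟨k, hk⟩ => ?_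
  have hmk : m ≤ k := by
    have h := hc.2.1 ⊥ (𝔪 ^ m) bot_le
    rwa [hk, hf, min_self, maximalIdeal_pow_le_pow_iff] at h
  rw [← hc.2.2 ⊥, hk, hf, min_eq_right hmk]

theorem isClosureOperation_of_map_maximalIdeal_pow_eq_min {m : ℕ}
    (hf : ∀ i, c (𝔪 ^ i) = 𝔪 ^ min i m) (hbot : c ⊥ = ⊥ ∨ c ⊥ = 𝔪 ^ m) :
    IsClosureOperation c := by
  refine ⟨fun I => ?_, fun I J hIJ => ?_, fun I => ?_⟩
  · rcases eq_bot_or_exists_eq_maximalIdeal_pow I with rfl | ⟨i, rfl⟩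
    · exact bot_le
    · rw [hf, maximalIdeal_pow_le_pow_iff]
      exact min_le_left i m
  · rcases eq_bot_or_exists_eq_maximalIdeal_pow I with rfl | ⟨i, rfl⟩
    · rcases hbot with h | h
      · rw [h]
        exact bot_le
      rcases eq_bot_or_exists_eq_maximalIdeal_pow J with rfl | ⟨j, rfl⟩
      · exact le_rfl
      · rw [h, hf, maximalIdeal_pow_le_pow_iff]
        exact min_le_right j m
    · rcases eq_bot_or_exists_eq_maximalIdeal_pow J with rfl | ⟨j, rfl⟩
      · exact absurd (eq_bot_iff.mpr hIJ) (maximalIdeal_pow_ne_bot_s2 i)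
      · rw [hf, hf, maximalIdeal_pow_le_pow_iff]
        exact min_le_min_right m (maximalIdeal_pow_le_pow_iff.mp hIJ)
  · rcases eq_bot_or_exists_eq_maximalIdeal_pow I with rfl | ⟨i, rfl⟩
    · rcases hbot with h | h
      · rw [h, h]
      · rw [h, hf, min_self]
    · rw [hf, hf, min_assoc, min_self]

theorem isSemiprimeOperation_of_map_maximalIdeal_pow_eq_min {m : ℕ}
    (hf : ∀ i, c (𝔪 ^ i) = 𝔪 ^ min i m) (hbot : c ⊥ = ⊥ ∨ c ⊥ = 𝔪 ^ m) :
    IsSemiprimeOperation c := by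
  refine ⟨isClosureOperation_of_map_maximalIdeal_pow_eq_min hf hbot, fun I J => ?_⟩
  rcases eq_bot_or_exists_eq_maximalIdeal_pow I with rfl | ⟨i, rfl⟩
  · rw [Ideal.bot_mul]
    exact Ideal.mul_le_left
  rcases eq_bot_or_exists_eq_maximalIdeal_pow J with rfl | ⟨j, rfl⟩
  · rw [Ideal.mul_bot]
    exact Ideal.mul_le_right
  · rw [← pow_add, hf, hf, hf, ← pow_add, maximalIdeal_pow_le_pow_iff]
    omega

end DiscreteValuationRing

theorem dvr_semiprime_classification {R : Type*} [CommRing R] [IsDomain R]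
    [IsDiscreteValuationRing R] (P : Ideal R) (hP : P = IsLocalRing.maximalIdeal R)
    (c : Ideal R → Ideal R) :
    IsSemiprimeOperation c ↔
      c = id ∨
        ∃ m : ℕ,
          (∀ i : ℕ, i < m → c (P ^ i) = P ^ i) ∧
            (∀ i : ℕ, m ≤ i → c (P ^ i) = P ^ m) ∧
              (c 0 = 0 ∨ c 0 = P ^ m) := by
  subst hP
  refine ⟨fun hc => ?_, ?_⟩
  · choose f hf using hc.1.exists_map_maximalIdeal_pow_eq
    rcases hc.eq_id_or_eq_min hf with rfl | ⟨m, hm⟩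
    · refine Or.inl (funext fun I => ?_)
      rcases IsDiscreteValuationRing.eq_bot_or_exists_eq_maximalIdeal_pow I with rfl | ⟨n, rfl⟩
      · exact hc.1.map_bot_of_map_maximalIdeal_pow_eq_self hf
      · exact hf n
    · simp only [hm] at hf
      obtain ⟨hlt, hge⟩ := forall_apply_eq_min_iff.mp hf
      exact Or.inr ⟨m, hlt, hge, hc.1.map_bot_of_map_maximalIdeal_pow_eq_min hf⟩
  · rintro (rfl | ⟨m, hlt, hge, hbot⟩)
    · exact isSemiprimeOperation_id
    · exact isSemiprimeOperation_of_map_maximalIdeal_pow_eq_min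
        (forall_apply_eq_min_iff.mpr ⟨hlt, hge⟩) hbot
end

section
/- Let (R, P) be a discrete valuation ring. The only prime operation on R is the identity map on the set of ideals of R. -/
open Ideal

theorem Ideal.eq_bot_of_le_mul_self {R : Type*} [CommRing R] [IsDomain R] {I J : Ideal R}
    (hI : I ≠ ⊤) (hJ : J.IsPrincipal) (h : J ≤ I * J) : J = ⊥ := by
  obtain ⟨x, rfl⟩ := hJ
  by_contra hx
  have hx0 : x ≠ 0 := fun h0 => hx (by simp [h0])
  have htop : ⊤ * span {x} ≤ I * span {x} := by simpa only [top_mul] using h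
  exact hI (top_le_iff.mp ((span_singleton_mul_left_mono hx0).mp htop))

theorem isPrimeOperation_id {R : Type*} [CommRing R] : IsPrimeOperation (id : Ideal R → Ideal R) :=
  ⟨⟨⟨fun _ => le_rfl, fun _ _ h => h, fun _ => rfl⟩, fun _ _ => le_rfl⟩, fun _ _ _ => rfl⟩

section

variable {R : Type*} [CommRing R] {c : Ideal R → Ideal R}

theorem IsClosureOperation.map_top (hc : IsClosureOperation c) : c ⊤ = ⊤ :=
  top_le_iff.mp (hc.1 ⊤)

namespace IsPrimeOperation

theorem map_span_singleton (hc : IsPrimeOperation c) {b : R} (hb : b ∈ nonZeroDivisors R) :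
    c (span {b}) = span {b} := by
  simpa only [mul_top, hc.1.1.map_top] using hc.2 b hb ⊤

theorem map_bot [IsDomain R] [IsPrincipalIdealRing R] (hR : ¬IsField R)
    (hc : IsPrimeOperation c) : c ⊥ = ⊥ := by
  obtain ⟨π, hπ0, hπ⟩ := Ring.exists_not_isUnit_of_not_isField hR
  have hfix : c ⊥ = span {π} * c ⊥ := by
    simpa only [mul_bot] using hc.2 π (mem_nonZeroDivisors_of_ne_zero hπ0) ⊥
  exact eq_bot_of_le_mul_self (span_singleton_eq_top.not.mpr hπ)
    (IsPrincipalIdealRing.principal _) hfix.le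

theorem eq_id [IsDomain R] [IsPrincipalIdealRing R] (hR : ¬IsField R)
    (hc : IsPrimeOperation c) : c = id := by
  funext I
  obtain ⟨a, rfl⟩ := IsPrincipalIdealRing.principal I
  rcases eq_or_ne a 0 with rfl | ha
  · simpa only [submodule_span_eq, span_singleton_eq_bot.mpr rfl, id_eq] using hc.map_bot hR
  · exact hc.map_span_singleton (mem_nonZeroDivisors_of_ne_zero ha)

end IsPrimeOperation

end

theorem dvr_prime_operation_eq_id {R : Type*} [CommRing R] [IsDomain R]
    [IsDiscreteValuationRing R] (c : Ideal R → Ideal R) :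
    IsPrimeOperation c ↔ c = id :=
  ⟨fun hc => hc.eq_id (IsDiscreteValuationRing.not_isField R), by
    rintro rfl
    exact isPrimeOperation_id⟩
end

section
/- Let R be a Dedekind domain, let P and Q be distinct maximal ideals of R, and let c be a semiprime operation on R such that there exist m, n with c(P^i) = P^{min(i,m)} for all i ≥ 0 and c(Q^j) = Q^{min(j,n)} for all j ≥ 0. Then c(P^i Q^j) = P^{min(i,m)} Q^{min(j,n)} for all i, j ≥ 0; equivalently, c(P^i Q^j) = c(P^i)·c(Q^j) = c(P^i) ∩ c(Q^j). -/
namespace IsSemiprimeOperation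

variable {R : Type*} [CommRing R] {c : Ideal R → Ideal R} (hc : IsSemiprimeOperation c)
  {I J : Ideal R}

include hc in
theorem map_mul_le_inf (I J : Ideal R) : c (I * J) ≤ c I ⊓ c J :=
  le_inf (hc.1.2.1 _ _ Ideal.mul_le_left) (hc.1.2.1 _ _ Ideal.mul_le_right)

include hc in
theorem map_mul_of_isCoprime (h : IsCoprime (c I) (c J)) : c (I * J) = c I * c J :=
  le_antisymm (Ideal.mul_eq_inf_of_isCoprime h ▸ hc.map_mul_le_inf I J) (hc.2 I J)

include hc in
theorem map_mul_eq_inf_of_isCoprime (h : IsCoprime (c I) (c J)) : c (I * J) = c I ⊓ c J := by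
  rw [hc.map_mul_of_isCoprime h, Ideal.mul_eq_inf_of_isCoprime h]

end IsSemiprimeOperation

theorem dedekind_semiprime_on_products_general {R : Type*} [CommRing R]
    (P Q : Ideal R) (hPmax : P.IsMaximal) (hQmax : Q.IsMaximal)
    (hPQ : P ≠ Q) (c : Ideal R → Ideal R) (hc : IsSemiprimeOperation c)
    (m n : ℕ)
    (hP : ∀ i : ℕ, c (P ^ i) = P ^ min i m)
    (hQ : ∀ j : ℕ, c (Q ^ j) = Q ^ min j n) :
    ∀ i j : ℕ,
      c (P ^ i * Q ^ j) = P ^ min i m * Q ^ min j n ∧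
        c (P ^ i * Q ^ j) = c (P ^ i) * c (Q ^ j) ∧
          c (P ^ i * Q ^ j) = c (P ^ i) ⊓ c (Q ^ j) := by
  intro i j
  have hcop : IsCoprime (c (P ^ i)) (c (Q ^ j)) := by
    rw [hP, hQ]
    exact (Ideal.isCoprime_of_isMaximal hPQ).pow
  have hmul := hc.map_mul_of_isCoprime hcop
  exact ⟨by rw [hmul, hP, hQ], hmul, hc.map_mul_eq_inf_of_isCoprime hcop⟩

theorem dedekind_semiprime_on_products {R : Type*} [CommRing R] [IsDomain R]
    [IsDedekindDomain R] (P Q : Ideal R) (hPmax : P.IsMaximal) (hQmax : Q.IsMaximal)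
    (hPQ : P ≠ Q) (c : Ideal R → Ideal R) (hc : IsSemiprimeOperation c)
    (m n : ℕ)
    (hP : ∀ i : ℕ, c (P ^ i) = P ^ min i m)
    (hQ : ∀ j : ℕ, c (Q ^ j) = Q ^ min j n) :
    ∀ i j : ℕ,
      c (P ^ i * Q ^ j) = P ^ min i m * Q ^ min j n ∧
        c (P ^ i * Q ^ j) = c (P ^ i) * c (Q ^ j) ∧
          c (P ^ i * Q ^ j) = c (P ^ i) ⊓ c (Q ^ j) :=
  dedekind_semiprime_on_products_general P Q hPmax hQmax hPQ c hc m n hP hQ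
end

section
/- Let K be a field, R = K[[t^2, t^3]], and fix an integer i ≥ 2. Define the map c on the ideals of R by c(I) = M_i if I = P_{i,a} for some a ∈ K, and c(I) = I for every other ideal I. Then c is a closure operation on R but c is not a semiprime operation. -/
open PowerSeries

/-- A (semiprime) operation is bounded if there is a nonzero proper ideal `J`
such that `c I = J` for every nonzero ideal `I ⊆ J`. -/
def IsBoundedOperation {R : Type*} [CommRing R] (c : Ideal R → Ideal R) : Prop :=
  ∃ J : Ideal R, J ≠ ⊥ ∧ J ≠ ⊤ ∧ ∀ I : Ideal R, I ≠ ⊥ → I ≤ J → c I = J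

/-- The ring `K[[t^2, t^3]]`: power series over `K` with vanishing linear coefficient. -/
def cuspRing (K : Type*) [Field K] : Subring (PowerSeries K) where
  carrier := {f | PowerSeries.coeff (R := K) 1 f = 0}
  zero_mem' := by simp
  one_mem' := by simp
  add_mem' := by
    intro a b ha hb
    simp only [Set.mem_setOf_eq, map_add] at *
    rw [ha, hb, add_zero]
  neg_mem' := by
    intro a ha
    simp only [Set.mem_setOf_eq, map_neg] at *
    rw [ha, neg_zero]
  mul_mem' := by
    intro a b ha hb
    simp only [Set.mem_setOf_eq] at *
    rw [PowerSeries.coeff_mul]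
    rw [Finset.Nat.sum_antidiagonal_eq_sum_range_succ_mk]
    simp [Finset.sum_range_succ, ha, hb]

/-- The principal ideal `P_{n,a} = (t^n + a t^{n+1})` of `K[[t^2,t^3]]`. -/
noncomputable def Pgen (K : Type*) [Field K] (n : ℕ) (a : K) : Ideal (cuspRing K) :=
  Ideal.span {x : cuspRing K |
    (x : PowerSeries K) = X ^ n + PowerSeries.C (R := K) a * X ^ (n + 1)}

/-- The two-generated ideal `M_n = (t^n, t^{n+1})` of `K[[t^2,t^3]]`. -/
noncomputable def Mgen (K : Type*) [Field K] (n : ℕ) : Ideal (cuspRing K) :=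
  Ideal.span {x : cuspRing K |
    (x : PowerSeries K) = X ^ n ∨ (x : PowerSeries K) = X ^ (n + 1)}

/-! In `K[[t^2, t^3]]` one has `P_{n,a} = {t^n u : u_1 = a u_0}` and `M_n = t^n K[[t]] ∩ R`.
An ideal `J ⊋ P_{i,a}` contains `t^{i+1}`: either `J` has an element of `M_i ∖ P_{i,a}`, and
`M_i / P_{i,a}` is spanned by `t^{i+1}`, or `J` has an element `t^m u` (`u` a unit) with `m < i`,
and `t^{i+1} = t^m u · t^{i+1-m} u⁻¹` with `i + 1 - m ≥ 2`. Since `M_i = P_{i,a} + (t^{i+1})`,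
this makes `c` monotone. Semiprimality fails at `P_{i,0} = (t^i)`: `c(P_{i,0})^2 = M_i^2` contains
`t^{2i+1}`, while `c(P_{i,0}^2) = (t^{2i}) = P_{2i,0}` does not, as `t ∉ R`. -/

universe u

variable {K : Type u} [Field K]

namespace cuspRing

lemma X_pow_mul_mem {k : ℕ} (hk : 2 ≤ k) (f : K⟦X⟧) : X ^ k * f ∈ cuspRing K := by
  change coeff 1 (X ^ k * f) = 0
  rw [coeff_X_pow_mul', if_neg (by omega)]

lemma X_pow_mem {k : ℕ} (hk : 2 ≤ k) : (X ^ k : K⟦X⟧) ∈ cuspRing K := by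
  simpa using X_pow_mul_mem hk (1 : K⟦X⟧)

noncomputable def const : K →+* cuspRing K :=
  PowerSeries.C.codRestrict _ fun a => by simp [cuspRing]

noncomputable def tPow (k : ℕ) (hk : 2 ≤ k) : cuspRing K := ⟨X ^ k, X_pow_mem hk⟩

noncomputable def pGen (n : ℕ) (hn : 2 ≤ n) (a : K) : cuspRing K :=
  tPow n hn + const a * tPow (n + 1) (by omega)

@[simp] lemma coe_const (a : K) : (const a : K⟦X⟧) = PowerSeries.C a := rfl

@[simp] lemma coe_tPow (k : ℕ) (hk : 2 ≤ k) :
    ((tPow k hk : cuspRing K) : K⟦X⟧) = X ^ k :=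
  rfl

lemma coe_pGen (n : ℕ) (hn : 2 ≤ n) (a : K) :
    (pGen n hn a : K⟦X⟧) = X ^ n * (1 + PowerSeries.C a * X) := by
  simp only [pGen, Subring.coe_add, Subring.coe_mul, coe_const, coe_tPow]
  ring

lemma tPow_mul_tPow (m n : ℕ) (hm : 2 ≤ m) (hn : 2 ≤ n) :
    tPow m hm * tPow n hn = (tPow (m + n) (by omega) : cuspRing K) :=
  Subtype.ext (pow_add X m n).symm

end cuspRing

open cuspRing

lemma coeff_one_add_C_mul_X_mul {R : Type*} [CommSemiring R] (a : R) (f : R⟦X⟧) :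
    coeff 0 ((1 + PowerSeries.C a * X) * f) = coeff 0 f ∧
      coeff 1 ((1 + PowerSeries.C a * X) * f) = coeff 1 f + a * coeff 0 f := by
  simp [add_mul, mul_assoc, coeff_C_mul, coeff_succ_X_mul]

lemma Pgen_eq_span_pGen (n : ℕ) (hn : 2 ≤ n) (a : K) :
    Pgen K n a = Ideal.span {pGen n hn a} := by
  rw [Pgen]
  congr 1
  ext x
  simp [Subtype.ext_iff, pGen]

lemma pGen_mem_Pgen (n : ℕ) (hn : 2 ≤ n) (a : K) : pGen n hn a ∈ Pgen K n a := by
  rw [Pgen_eq_span_pGen n hn]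
  exact Ideal.mem_span_singleton_self _

lemma Pgen_zero (n : ℕ) (hn : 2 ≤ n) : Pgen K n 0 = Ideal.span {tPow n hn} := by
  simp [Pgen_eq_span_pGen n hn, pGen]

lemma Mgen_eq_span_pair (n : ℕ) (hn : 2 ≤ n) :
    Mgen K n = Ideal.span {tPow n hn, tPow (n + 1) (by omega)} := by
  rw [Mgen]
  congr 1
  ext x
  simp [Subtype.ext_iff]

lemma mem_Mgen_iff {n : ℕ} (hn : 2 ≤ n) {x : cuspRing K} :
    x ∈ Mgen K n ↔ X ^ n ∣ (x : K⟦X⟧) := by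
  constructor
  · intro hx
    suffices Mgen K n ≤ (Ideal.span {X ^ n}).comap (cuspRing K).subtype from
      Ideal.mem_span_singleton.mp (this hx)
    rw [Mgen_eq_span_pair n hn, Ideal.span_le, Set.pair_subset_iff]
    exact ⟨Ideal.mem_span_singleton_self _,
      Ideal.mem_span_singleton.mpr (pow_dvd_pow X n.le_succ)⟩
  · rintro ⟨u, hu⟩
    have hr : u - PowerSeries.C (coeff 1 u) * X ∈ cuspRing K := by
      change coeff 1 (u - PowerSeries.C (coeff 1 u) * X) = 0
      simp
    rw [Mgen_eq_span_pair n hn, Ideal.mem_span_pair]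
    refine ⟨⟨_, hr⟩, const (coeff 1 u), Subtype.ext ?_⟩
    simp only [Subring.coe_add, Subring.coe_mul, coe_const, coe_tPow, hu]
    ring

lemma mem_Pgen_iff {n : ℕ} (hn : 2 ≤ n) {a : K} {x : cuspRing K} :
    x ∈ Pgen K n a ↔ ∃ u, (x : K⟦X⟧) = X ^ n * u ∧ coeff 1 u = a * coeff 0 u := by
  rw [Pgen_eq_span_pGen n hn, Ideal.mem_span_singleton']
  constructor
  · rintro ⟨r, rfl⟩
    obtain ⟨h0, h1⟩ := coeff_one_add_C_mul_X_mul a (r : K⟦X⟧)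
    refine ⟨(1 + PowerSeries.C a * X) * (r : K⟦X⟧), ?_, ?_⟩
    · rw [Subring.coe_mul, coe_pGen]
      ring
    · rw [h0, h1, show coeff 1 (r : K⟦X⟧) = 0 from r.2, zero_add]
  · rintro ⟨u, hx, hu⟩
    set w : K⟦X⟧ := 1 + PowerSeries.C a * X
    have hw : w * w⁻¹ = 1 := PowerSeries.mul_inv_cancel w (by simp [w])
    have hr : w⁻¹ * u ∈ cuspRing K := by
      obtain ⟨h0, h1⟩ := coeff_one_add_C_mul_X_mul a (w⁻¹ * u)
      rw [← mul_assoc, hw, one_mul] at h0 h1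
      change coeff 1 (w⁻¹ * u) = 0
      linear_combination hu - h1 + a * h0
    refine ⟨⟨_, hr⟩, Subtype.ext ?_⟩
    rw [Subring.coe_mul, coe_pGen, hx]
    linear_combination (X ^ n * u) * hw

lemma tPow_mem_Mgen {n k : ℕ} (hn : 2 ≤ n) (hk : 2 ≤ k) (hnk : n ≤ k) :
    tPow k hk ∈ Mgen K n :=
  (mem_Mgen_iff hn).2 (pow_dvd_pow X hnk)

lemma Pgen_le_Mgen {n : ℕ} (hn : 2 ≤ n) (a : K) : Pgen K n a ≤ Mgen K n := fun _ hx => by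
  obtain ⟨u, hu, -⟩ := (mem_Pgen_iff hn).1 hx
  exact (mem_Mgen_iff hn).2 ⟨u, hu⟩

lemma tPow_succ_not_mem_Pgen {n : ℕ} (hn : 2 ≤ n) (a : K) :
    tPow (n + 1) (by omega) ∉ Pgen K n a := by
  rintro hx
  obtain ⟨u, hu, hcoeff⟩ := (mem_Pgen_iff hn).1 hx
  rw [coe_tPow, pow_succ] at hu
  obtain rfl : X = u := mul_left_cancel₀ (pow_ne_zero n X_ne_zero) hu
  simp at hcoeff

lemma Mgen_ne_Pgen {n : ℕ} (hn : 2 ≤ n) (a : K) : Mgen K n ≠ Pgen K n a := fun h =>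
  tPow_succ_not_mem_Pgen hn a (h ▸ tPow_mem_Mgen hn _ n.le_succ)

lemma Pgen_ne_Pgen_of_lt {m n : ℕ} (hm : 2 ≤ m) (hmn : m < n) (a b : K) :
    Pgen K n b ≠ Pgen K m a := by
  intro h
  have hp : pGen m hm a ∈ Mgen K n := Pgen_le_Mgen (by omega) b (h ▸ pGen_mem_Pgen m hm a)
  have hdvd := X_pow_dvd_iff.1 ((mem_Mgen_iff (by omega)).1 hp) m hmn
  simp [coe_pGen, coeff_X_pow_mul'] at hdvd

lemma Pgen_zero_mul_Pgen_zero {m n : ℕ} (hm : 2 ≤ m) (hn : 2 ≤ n) :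
    Pgen K m 0 * Pgen K n 0 = Pgen K (m + n) 0 := by
  rw [Pgen_zero m hm, Pgen_zero n hn, Pgen_zero (m + n) (by omega),
    Ideal.span_singleton_mul_span_singleton, tPow_mul_tPow]

lemma Mgen_le_of_Pgen_le {n : ℕ} (hn : 2 ≤ n) {a : K} {J : Ideal (cuspRing K)}
    (hP : Pgen K n a ≤ J) (ht : tPow (n + 1) (by omega) ∈ J) : Mgen K n ≤ J := by
  rw [Mgen_eq_span_pair n hn, Ideal.span_le, Set.pair_subset_iff]
  refine ⟨?_, ht⟩
  simpa [pGen] using J.sub_mem (hP (pGen_mem_Pgen n hn a)) (J.mul_mem_left (const a) ht)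

lemma tPow_succ_mem_Pgen_sup {n : ℕ} (hn : 2 ≤ n) {a : K} {g : cuspRing K}
    (hgM : g ∈ Mgen K n) (hgP : g ∉ Pgen K n a) :
    tPow (n + 1) (by omega) ∈ Pgen K n a ⊔ Ideal.span {g} := by
  obtain ⟨u, hu⟩ := (mem_Mgen_iff hn).1 hgM
  set d := coeff 1 u - a * coeff 0 u
  have hd : d ≠ 0 := fun hd => hgP ((mem_Pgen_iff hn).2 ⟨u, hu, by linear_combination hd⟩)
  have he : tPow (n + 1) (by omega) - const d⁻¹ * g ∈ Pgen K n a := by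
    refine (mem_Pgen_iff hn).2 ⟨X - PowerSeries.C d⁻¹ * u, ?_, ?_⟩
    · simp only [AddSubgroupClass.coe_sub, Subring.coe_mul, coe_tPow, coe_const, hu]
      ring
    · simp only [map_sub, coeff_C_mul, coeff_one_X, coeff_zero_X]
      field_simp
      simp only [d]
      ring
  rw [← sub_add_cancel (tPow (n + 1) _) (const d⁻¹ * g)]
  exact Submodule.add_mem_sup he (Ideal.mul_mem_left _ _ (Ideal.mem_span_singleton_self g))

lemma tPow_succ_mem_span_of_not_mem_Mgen {n : ℕ} (hn : 2 ≤ n) {g : cuspRing K}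
    (hgM : g ∉ Mgen K n) : tPow (n + 1) (by omega) ∈ Ideal.span {g} := by
  have hg0 : (g : K⟦X⟧) ≠ 0 := fun h =>
    hgM (by rw [show g = 0 from Subtype.ext h]; exact zero_mem _)
  set m := (g : K⟦X⟧).order.toNat
  set u := (g : K⟦X⟧).divXPowOrder
  have hg : X ^ m * u = (g : K⟦X⟧) := X_pow_order_mul_divXPowOrder
  have hu : u * u⁻¹ = 1 :=
    PowerSeries.mul_inv_cancel u (constantCoeff_divXPowOrder_eq_zero_iff.not.2 hg0)
  have hmn : m < n := by
    by_contra! h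
    exact hgM ((mem_Mgen_iff hn).2 ((pow_dvd_pow X h).trans ⟨u, hg.symm⟩))
  refine Ideal.mem_span_singleton'.2
    ⟨⟨X ^ (n + 1 - m) * u⁻¹, X_pow_mul_mem (by omega) _⟩, Subtype.ext ?_⟩
  rw [Subring.coe_mul, coe_tPow, ← hg]
  calc X ^ (n + 1 - m) * u⁻¹ * (X ^ m * u) = X ^ (n + 1 - m + m) * (u * u⁻¹) := by ring
    _ = X ^ (n + 1) := by rw [hu, mul_one, Nat.sub_add_cancel (by omega)]

lemma Mgen_le_of_Pgen_lt {n : ℕ} (hn : 2 ≤ n) {a : K} {J : Ideal (cuspRing K)}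
    (hPJ : Pgen K n a < J) : Mgen K n ≤ J := by
  obtain ⟨g, hgJ, hgP⟩ := SetLike.exists_of_lt hPJ
  have hg : Ideal.span {g} ≤ J := (Ideal.span_singleton_le_iff_mem J).2 hgJ
  refine Mgen_le_of_Pgen_le hn hPJ.le ?_
  by_cases hgM : g ∈ Mgen K n
  · exact sup_le hPJ.le hg (tPow_succ_mem_Pgen_sup hn hgM hgP)
  · exact hg (tPow_succ_mem_span_of_not_mem_Mgen hn hgM)

theorem isClosureOperation_of_collapse {R ι : Type*} [CommRing R] {P : ι → Ideal R}
    {M : Ideal R} {c : Ideal R → Ideal R} (hcP : ∀ a, c (P a) = M)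
    (hc : ∀ I, (¬ ∃ a, I = P a) → c I = I) (hPM : ∀ a, P a ≤ M) (hM : ∀ a, M ≠ P a)
    (hMle : ∀ a J, P a < J → M ≤ J) : IsClosureOperation c := by
  have hext : ∀ I, I ≤ c I := by
    intro I
    by_cases hI : ∃ a, I = P a
    · obtain ⟨a, rfl⟩ := hI
      exact (hPM a).trans_eq (hcP a).symm
    · exact (hc I hI).ge
  refine ⟨hext, fun I J hIJ => ?_, fun I => ?_⟩
  · by_cases hI : ∃ a, I = P a
    · obtain ⟨a, rfl⟩ := hI
      by_cases hJ : ∃ b, J = P b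
      · obtain ⟨b, rfl⟩ := hJ
        rw [hcP, hcP]
      · rw [hcP, hc J hJ]
        exact hMle a J (lt_of_le_of_ne hIJ fun h => hJ ⟨a, h.symm⟩)
    · exact (hc I hI).trans_le (hIJ.trans (hext J))
  · by_cases hI : ∃ a, I = P a
    · obtain ⟨a, rfl⟩ := hI
      rw [hcP]
      exact hc M fun ⟨b, hb⟩ => hM b hb
    · rw [hc I hI, hc I hI]

theorem cusp_closure_not_semiprime {K : Type*} [Field K] (i : ℕ) (hi : 2 ≤ i)
    (c : Ideal (cuspRing K) → Ideal (cuspRing K))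
    (h1 : ∀ a : K, c (Pgen K i a) = Mgen K i)
    (h2 : ∀ I : Ideal (cuspRing K), (¬ ∃ a : K, I = Pgen K i a) → c I = I) :
    IsClosureOperation c ∧ ¬ IsSemiprimeOperation c := by
  refine ⟨isClosureOperation_of_collapse h1 h2 (Pgen_le_Mgen hi) (Mgen_ne_Pgen hi)
    fun _ _ => Mgen_le_of_Pgen_lt hi, ?_⟩
  rintro ⟨-, hmul⟩
  have hsq : c (Pgen K i 0 * Pgen K i 0) = Pgen K (i + i) 0 := by
    rw [Pgen_zero_mul_Pgen_zero hi hi]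
    exact h2 _ fun ⟨b, hb⟩ => Pgen_ne_Pgen_of_lt hi (by omega) b 0 hb
  have hmem : (tPow (i + i + 1) (by omega) : cuspRing K) ∈ Mgen K i * Mgen K i := by
    have h := Ideal.mul_mem_mul (tPow_mem_Mgen (K := K) hi hi le_rfl)
      (tPow_mem_Mgen hi (by omega) (i.le_add_right 1))
    simpa only [tPow_mul_tPow, ← add_assoc] using h
  have hle := hmul (Pgen K i 0) (Pgen K i 0)
  rw [h1, hsq] at hle
  exact tPow_succ_not_mem_Pgen (by omega) 0 (hle hmem)
end
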